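/- Let G be a simple graph on n vertices with maximum degree d_max, A₁ a symmetric matrix supported on edges of G with zero diagonal, D₁ the diagonal matrix of row sums of A₁, and L₁ = D₁ − A₁. Let Δx ∈ ℝ^m be the vector of edge entries (Δa_e)_{e∈E}. Then 2‖Δx‖₂² ≤ ‖L₁‖_F² ≤ 2(d_max + 1)‖Δx‖₂². -/

import Mathlib

/-!
Since `A₁` has zero diagonal, the squared Frobenius norm of `L₁ = D₁ - A₁` splits as
`∑ᵢ dᵢ² + ∑ᵢⱼ A₁ᵢⱼ²`, where `dᵢ` are the row sums and the second term counts every edge twice,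
i.e. equals `2‖Δx‖²`. This gives the lower bound, and the upper bound follows from Cauchy–Schwarz
over the neighbourhood of `i`: `dᵢ² ≤ deg i · ∑ⱼ A₁ᵢⱼ² ≤ d_max · ∑ⱼ A₁ᵢⱼ²`.
-/

open Matrix Finset

namespace Matrix

variable {m n R : Type*} [Fintype m] [Fintype n]

theorem trace_transpose_mul_self [CommSemiring R] (M : Matrix m n R) :
    (Mᵀ * M).trace = ∑ i, ∑ j, M i j ^ 2 := by
  simp only [trace, diag_apply, mul_apply, transpose_apply, sq]
  exact sum_comm

theorem sum_sq_diagonal_sub [DecidableEq n] [CommRing R] (d : n → R) (A : Matrix n n R)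
    (hA : ∀ i, A i i = 0) :
    ∑ i, ∑ j, (diagonal d - A) i j ^ 2 = ∑ i, d i ^ 2 + ∑ i, ∑ j, A i j ^ 2 := by
  have hentry : ∀ i j, (diagonal d - A) i j ^ 2 = (if i = j then d i ^ 2 else 0) + A i j ^ 2 := by
    intro i j
    by_cases h : i = j
    · subst h; simp [hA]
    · simp [h]
  simp only [hentry, sum_add_distrib, sum_ite_eq, mem_univ, if_true]

end Matrix

namespace SimpleGraph

variable {V M R : Type*} [Fintype V] (G : SimpleGraph V) [DecidableRel G.Adj]

/-- Every edge is the underlying edge of exactly two darts. -/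
theorem sum_dart_edge [AddCommMonoid M] (g : Sym2 V → M) :
    ∑ d : G.Dart, g d.edge = 2 • ∑ e ∈ G.edgeFinset, g e := by
  classical
  rw [← sum_fiberwise_of_maps_to (g := Dart.edge) (fun d _ => mem_edgeFinset.mpr d.edge_mem),
    smul_sum]
  refine sum_congr rfl fun e he => ?_
  rw [sum_congr rfl fun d hd => congrArg g (mem_filter.mp hd).2, sum_const,
    G.dart_edge_fiber_card e (mem_edgeFinset.mp he)]

theorem sum_dart_edge_eq_sum_adj [AddCommMonoid M] (g : Sym2 V → M) :
    ∑ d : G.Dart, g d.edge = ∑ i, ∑ j, if G.Adj i j then g s(i, j) else 0 := by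
  rw [← sum_product', ← sum_filter]
  exact sum_bij' (fun d _ => d.toProd) (fun p hp => ⟨p, (mem_filter.mp hp).2⟩)
    (by simp) (by simp) (by simp) (by simp) (by simp [Dart.edge])

theorem two_mul_sum_edgeFinset [Semiring M] (g : Sym2 V → M) :
    2 * ∑ e ∈ G.edgeFinset, g e = ∑ i, ∑ j, if G.Adj i j then g s(i, j) else 0 := by
  rw [← G.sum_dart_edge_eq_sum_adj, G.sum_dart_edge, two_nsmul, two_mul]

section Supported

variable [CommRing R] {A : Matrix V V R}

theorem sum_sq_eq_two_mul_sum_edgeFinset (hsupp : ∀ i j, ¬ G.Adj i j → A i j = 0)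
    (hsym : ∀ i j, A i j = A j i) :
    ∑ i, ∑ j, A i j ^ 2 = 2 * ∑ e ∈ G.edgeFinset,
      Sym2.lift ⟨fun i j => A i j ^ 2, fun i j => by dsimp only; rw [hsym i j]⟩ e := by
  rw [two_mul_sum_edgeFinset]
  refine sum_congr rfl fun i _ => sum_congr rfl fun j _ => ?_
  by_cases h : G.Adj i j
  · simp [h]
  · simp [h, hsupp i j h]

variable [LinearOrder R] [IsStrictOrderedRing R]

theorem sq_sum_le_degree_mul_sum_sq (hsupp : ∀ i j, ¬ G.Adj i j → A i j = 0) (i : V) :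
    (∑ j, A i j) ^ 2 ≤ G.degree i * ∑ j, A i j ^ 2 := by
  have hrow : ∀ f : V → R, (∀ j, j ∉ G.neighborFinset i → f j = 0) →
      ∑ j, f j = ∑ j ∈ G.neighborFinset i, f j := fun f hf =>
    (sum_subset (subset_univ _) fun j _ hj => hf j hj).symm
  calc (∑ j, A i j) ^ 2 = (∑ j ∈ G.neighborFinset i, A i j) ^ 2 := by
        rw [hrow _ fun j hj => hsupp i j (by simpa using hj)]
    _ ≤ G.degree i * ∑ j ∈ G.neighborFinset i, A i j ^ 2 := by
        simpa using sq_sum_le_card_mul_sum_sq (s := G.neighborFinset i) (f := A i)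
    _ = G.degree i * ∑ j, A i j ^ 2 := by
        rw [hrow _ fun j hj => by simp [hsupp i j (by simpa using hj)]]

theorem sum_sq_sum_le_sup_degree_mul (hsupp : ∀ i j, ¬ G.Adj i j → A i j = 0) :
    ∑ i, (∑ j, A i j) ^ 2 ≤ ((univ.sup fun i => G.degree i : ℕ) : R) * ∑ i, ∑ j, A i j ^ 2 := by
  rw [mul_sum]
  refine sum_le_sum fun i _ => (G.sq_sum_le_degree_mul_sum_sq hsupp i).trans ?_
  gcongr
  exact le_sup (f := fun i => G.degree i) (mem_univ i)

end Supported

end SimpleGraph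

theorem stmt_11 {n : ℕ} (G : SimpleGraph (Fin n)) [DecidableRel G.Adj]
    (A₁ : Matrix (Fin n) (Fin n) ℝ)
    (hsym : ∀ i j, A₁ i j = A₁ j i)
    (hsupp : ∀ i j, ¬ G.Adj i j → A₁ i j = 0) :
    2 * (∑ e ∈ G.edgeFinset,
          Sym2.lift ⟨fun i j => (A₁ i j) ^ 2, fun i j => by dsimp only; rw [hsym i j]⟩ e)
        ≤ ((Matrix.diagonal (fun i => ∑ j, A₁ i j) - A₁)ᵀ *
            (Matrix.diagonal (fun i => ∑ j, A₁ i j) - A₁)).trace ∧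
      ((Matrix.diagonal (fun i => ∑ j, A₁ i j) - A₁)ᵀ *
          (Matrix.diagonal (fun i => ∑ j, A₁ i j) - A₁)).trace
        ≤ 2 * (((Finset.univ.sup (fun i => G.degree i) : ℕ) : ℝ) + 1) *
            ∑ e ∈ G.edgeFinset,
              Sym2.lift ⟨fun i j => (A₁ i j) ^ 2, fun i j => by dsimp only; rw [hsym i j]⟩ e := by
  have hdiag : ∀ i, A₁ i i = 0 := fun i => hsupp i i (G.irrefl)
  have hedges := G.sum_sq_eq_two_mul_sum_edgeFinset hsupp hsym
  have hrows := G.sum_sq_sum_le_sup_degree_mul hsupp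
  rw [trace_transpose_mul_self, sum_sq_diagonal_sub _ _ hdiag]
  constructor
  · have hrowsq : 0 ≤ ∑ i, (∑ j, A₁ i j) ^ 2 := by positivity
    linarith
  · linear_combination hrows + (((univ.sup fun i => G.degree i : ℕ) : ℝ) + 1) * hedges
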